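/- Let p and q be probability densities on 𝒳 with p, q > 0 everywhere and r(x) := p(x)/q(x). For each m, let U_m be the conformal p-value computed with score function r from m calibration samples i.i.d. ~ p and a test point ~ q (with independent uniform tie-breaking). Then lim_{m→∞} E[U_m] = 1/2 − (1/4)·E_{X, X' ~ q, independent}[ |r(X) − r(X')| ], which is strictly less than 1/2 whenever p ≠ q. -/

import Mathlib

open MeasureTheory
open scoped ENNReal NNReal

/-- The distribution on `𝒳` with density `p` w.r.t. the base measure `lam`. -/
noncomputable def densMeasure {𝒳 : Type*} [MeasurableSpace 𝒳] (lam : Measure 𝒳) (p : 𝒳 → ℝ) :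
    Measure 𝒳 := lam.withDensity fun x => ENNReal.ofReal (p x)

/-- `auc μ ν s = P(s(X) > s(X̃)) + ½ P(s(X) = s(X̃))` for independent `X ~ μ`, `X̃ ~ ν`. -/
noncomputable def auc {𝒳 : Type*} [MeasurableSpace 𝒳] (μ ν : Measure 𝒳) (s : 𝒳 → ℝ) : ℝ :=
  ((μ.prod ν) {z : 𝒳 × 𝒳 | s z.2 < s z.1}).toReal +
    (1 / 2) * ((μ.prod ν) {z : 𝒳 × 𝒳 | s z.1 = s z.2}).toReal

open ProbabilityTheory Filter Topology

set_option linter.unusedVariables false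

lemma aux_lintegral_one {𝒳 : Type*} [MeasurableSpace 𝒳] (lam : Measure 𝒳) (p : 𝒳 → ℝ)
    (hp0 : ∀ x, 0 ≤ p x) (hp1 : ∫ x, p x ∂lam = 1) :
    ∫⁻ x, ENNReal.ofReal (p x) ∂lam = 1 := by
  have hint : Integrable p lam := by
    by_contra h; rw [integral_undef h] at hp1; norm_num at hp1
  rw [← ofReal_integral_eq_lintegral_ofReal hint (ae_of_all _ hp0), hp1, ENNReal.ofReal_one]

lemma densMeasure_isProb {𝒳 : Type*} [MeasurableSpace 𝒳] (lam : Measure 𝒳)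
    (p : 𝒳 → ℝ) (hp0 : ∀ x, 0 ≤ p x) (hp1 : ∫ x, p x ∂lam = 1) :
    IsProbabilityMeasure (densMeasure lam p) := by
  constructor
  rw [densMeasure, withDensity_apply _ MeasurableSet.univ, Measure.restrict_univ,
    aux_lintegral_one lam p hp0 hp1]

lemma aux_prod_withDensity {α β : Type*} [MeasurableSpace α] [MeasurableSpace β]
    (ν : Measure α) (κ : Measure β) [SFinite ν] [SigmaFinite κ]
    {f : α → ℝ≥0∞} (hf : Measurable f) [SigmaFinite (ν.withDensity f)] :
    (ν.withDensity f).prod κ = (ν.prod κ).withDensity (fun z => f z.1) := by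
  refine Measure.prod_eq fun s t hs ht => ?_
  rw [withDensity_apply _ (hs.prod ht), ← Measure.prod_restrict,
    lintegral_prod (fun z => f z.1) (hf.comp measurable_fst).aemeasurable]
  simp only [lintegral_const, Measure.restrict_apply_univ]
  rw [lintegral_mul_const _ hf, withDensity_apply _ hs]

lemma integral_withDensity_ofReal {α : Type*} [MeasurableSpace α] {μ : Measure α} {f : α → ℝ}
    (hf : Measurable f) (h0 : ∀ x, 0 ≤ f x) (g : α → ℝ) :
    ∫ x, g x ∂(μ.withDensity fun x => ENNReal.ofReal (f x)) = ∫ x, f x * g x ∂μ := by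
  have h : (fun x => ENNReal.ofReal (f x)) = fun x => ((f x).toNNReal : ℝ≥0∞) := rfl
  rw [h, integral_withDensity_eq_integral_smul hf.real_toNNReal g]
  congr 1; funext x
  rw [NNReal.smul_def, Real.coe_toNNReal _ (h0 x), smul_eq_mul]

lemma aux_tendsto (a b : ℝ) :
    Tendsto (fun m : ℕ => (1 / (m + 1 : ℝ)) * ((m : ℝ) * a + (1 / 2 + (m : ℝ) * (b * (1 / 2)))))
      atTop (𝓝 (a + (1 / 2) * b)) := by
  have h : ∀ m : ℕ, (1 / (m + 1 : ℝ)) * ((m : ℝ) * a + (1 / 2 + (m : ℝ) * (b * (1 / 2))))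
      = (a + (1/2) * b) + (1/2 - a - (1/2) * b) * (1 / ((m : ℝ) + 1)) := by
    intro m
    have hm : (m : ℝ) + 1 ≠ 0 := by positivity
    field_simp
    ring
  simp only [h]
  have h2 : Tendsto (fun m : ℕ => (a + (1/2)*b) + (1/2 - a - (1/2)*b) * (1 / ((m:ℝ) + 1)))
      atTop (𝓝 ((a + (1/2)*b) + (1/2 - a - (1/2)*b) * 0)) :=
    tendsto_const_nhds.add (tendsto_const_nhds.mul tendsto_one_div_add_atTop_nhds_zero_nat)
  simpa using h2

lemma aux_key {𝒳 : Type*} [MeasurableSpace 𝒳] (ν : Measure 𝒳) [IsProbabilityMeasure ν]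
    (r : 𝒳 → ℝ) (hrm : Measurable r) (hr0 : ∀ x, 0 ≤ r x)
    (hri : Integrable r ν) (hr1 : ∫ x, r x ∂ν = 1)
    (μp : Measure 𝒳) (hμp : μp = ν.withDensity (fun x => ENNReal.ofReal (r x)))
    [IsProbabilityMeasure μp] :
    (∫ z : 𝒳 × 𝒳, (if r z.1 < r z.2 then (1:ℝ) else 0) ∂(μp.prod ν)) +
      (1/2) * (∫ z : 𝒳 × 𝒳, (if r z.1 = r z.2 then (1:ℝ) else 0) ∂(μp.prod ν)) =
    1/2 - (1/4) * ∫ z : 𝒳 × 𝒳, |r z.1 - r z.2| ∂(ν.prod ν) := by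
  haveI : SigmaFinite (ν.withDensity fun x => ENNReal.ofReal (r x)) := by
    rw [← hμp]; infer_instance
  have hprod : μp.prod ν = (ν.prod ν).withDensity (fun z => ENNReal.ofReal (r z.1)) := by
    rw [hμp]
    exact aux_prod_withDensity ν ν hrm.ennreal_ofReal
  have hwd : ∀ g : 𝒳 × 𝒳 → ℝ, ∫ z, g z ∂(μp.prod ν) = ∫ z, r z.1 * g z ∂(ν.prod ν) := by
    intro g
    rw [hprod]
    exact integral_withDensity_ofReal (hrm.comp measurable_fst) (fun z => hr0 _) g
  -- basic integrability
  have h_r1 : Integrable (fun z : 𝒳 × 𝒳 => r z.1) (ν.prod ν) := by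
    simpa using hri.mul_prod (integrable_const (1:ℝ))
  have h_r2 : Integrable (fun z : 𝒳 × 𝒳 => r z.2) (ν.prod ν) := by
    simpa using (integrable_const (1:ℝ)).mul_prod hri
  have hSlt : MeasurableSet {z : 𝒳 × 𝒳 | r z.1 < r z.2} :=
    measurableSet_lt (hrm.comp measurable_fst) (hrm.comp measurable_snd)
  have hSeq : MeasurableSet {z : 𝒳 × 𝒳 | r z.1 = r z.2} :=
    measurableSet_eq_fun (hrm.comp measurable_fst) (hrm.comp measurable_snd)
  have hmlt : Measurable (fun z : 𝒳 × 𝒳 => if r z.1 < r z.2 then (1:ℝ) else 0) :=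
    Measurable.ite hSlt measurable_const measurable_const
  have hmeq : Measurable (fun z : 𝒳 × 𝒳 => if r z.1 = r z.2 then (1:ℝ) else 0) :=
    Measurable.ite hSeq measurable_const measurable_const
  have hind_le : ∀ (c : Prop) [Decidable c], (if c then (1:ℝ) else 0) ≤ 1 := by
    intro c _; split <;> norm_num
  have hind_nonneg : ∀ (c : Prop) [Decidable c], (0:ℝ) ≤ (if c then (1:ℝ) else 0) := by
    intro c _; split <;> norm_num
  have hIlt : Integrable (fun z : 𝒳 × 𝒳 => r z.1 * (if r z.1 < r z.2 then (1:ℝ) else 0))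
      (ν.prod ν) := by
    refine h_r1.mono' ((hrm.comp measurable_fst).mul hmlt).aestronglyMeasurable
      (ae_of_all _ fun z => ?_)
    rw [Real.norm_eq_abs, abs_mul, abs_of_nonneg (hr0 _), abs_of_nonneg (hind_nonneg _)]
    exact mul_le_of_le_one_right (hr0 _) (hind_le _)
  have hIeq : Integrable (fun z : 𝒳 × 𝒳 => r z.1 * (if r z.1 = r z.2 then (1:ℝ) else 0))
      (ν.prod ν) := by
    refine h_r1.mono' ((hrm.comp measurable_fst).mul hmeq).aestronglyMeasurable
      (ae_of_all _ fun z => ?_)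
    rw [Real.norm_eq_abs, abs_mul, abs_of_nonneg (hr0 _), abs_of_nonneg (hind_nonneg _)]
    exact mul_le_of_le_one_right (hr0 _) (hind_le _)
  set F : 𝒳 × 𝒳 → ℝ := fun z =>
    r z.1 * (if r z.1 < r z.2 then (1:ℝ) else 0)
      + (1/2) * (r z.1 * (if r z.1 = r z.2 then (1:ℝ) else 0)) with hF
  have hIF : Integrable F (ν.prod ν) := hIlt.add (hIeq.const_mul _)
  have hLF : (∫ z : 𝒳 × 𝒳, (if r z.1 < r z.2 then (1:ℝ) else 0) ∂(μp.prod ν)) +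
      (1/2) * (∫ z : 𝒳 × 𝒳, (if r z.1 = r z.2 then (1:ℝ) else 0) ∂(μp.prod ν))
      = ∫ z, F z ∂(ν.prod ν) := by
    rw [hwd, hwd, ← integral_const_mul, ← integral_add hIlt (hIeq.const_mul _)]
  -- swap
  have hswap : ∫ z, F z ∂(ν.prod ν) = ∫ z, F z.swap ∂(ν.prod ν) :=
    (integral_prod_swap F).symm
  have hIFswap : Integrable (fun z : 𝒳 × 𝒳 => F z.swap) (ν.prod ν) := hIF.swap
  have hsum : ∀ z : 𝒳 × 𝒳, F z + F z.swap = (r z.1 + r z.2 - |r z.1 - r z.2|) / 2 := by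
    intro z
    simp only [hF, Prod.fst_swap, Prod.snd_swap]
    rcases lt_trichotomy (r z.1) (r z.2) with h | h | h
    · rw [if_pos h, if_neg h.ne, if_neg (not_lt.mpr h.le), if_neg h.ne',
        abs_of_nonpos (by linarith)]
      ring
    · rw [if_neg (by rw [h]; exact lt_irrefl _), if_pos h, if_neg (by rw [h]; exact lt_irrefl _),
        if_pos h.symm, h, abs_of_nonpos (by linarith)]
      ring
    · rw [if_neg (not_lt.mpr h.le), if_neg h.ne', if_pos h, if_neg h.ne,
        abs_of_nonneg (by linarith)]
      ring
  have habs : Integrable (fun z : 𝒳 × 𝒳 => |r z.1 - r z.2|) (ν.prod ν) := (h_r1.sub h_r2).abs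
  have h2L : (∫ z, F z ∂(ν.prod ν)) + (∫ z, F z.swap ∂(ν.prod ν))
      = 1 - (1/2) * ∫ z : 𝒳 × 𝒳, |r z.1 - r z.2| ∂(ν.prod ν) := by
    rw [← integral_add hIF hIFswap]
    have : ∫ z, (F z + F z.swap) ∂(ν.prod ν)
        = ∫ z : 𝒳 × 𝒳, (r z.1 + r z.2 - |r z.1 - r z.2|) / 2 ∂(ν.prod ν) :=
      integral_congr_ae (ae_of_all _ hsum)
    rw [this]
    have e1 : ∫ z : 𝒳 × 𝒳, r z.1 ∂(ν.prod ν) = 1 := by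
      have := integral_prod_mul (μ := ν) (ν := ν) r (fun _ => (1:ℝ))
      simpa [hr1] using this
    have e2 : ∫ z : 𝒳 × 𝒳, r z.2 ∂(ν.prod ν) = 1 := by
      have := integral_prod_mul (μ := ν) (ν := ν) (fun _ => (1:ℝ)) r
      simpa [hr1] using this
    have hsum_int : Integrable (fun z : 𝒳 × 𝒳 => r z.1 + r z.2) (ν.prod ν) := h_r1.add h_r2
    rw [integral_div, integral_sub hsum_int habs, integral_add h_r1 h_r2, e1, e2]
    ring
  have := hLF
  rw [hswap] at hLF
  linarith [hLF, this, h2L, hswap]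

/-- With calibration samples `X_1, X_2, …` i.i.d. from the density `p`, a test point
`X̃` from the density `q` independent of them, and an independent tie-breaking variable
`ξ ~ Uniform[0,1]`, the conformal p-values `U_m` computed with the oracle score `r = p/q` satisfy
`lim_{m→∞} E[U_m] = 1/2 − (1/4)·E_{X,X' ~ q}[|r(X) − r(X')|]`, which is `< 1/2` when `p ≠ q`. -/
theorem stmt4 {𝒳 Ω : Type*} [MeasurableSpace 𝒳] [MeasurableSpace Ω]
    (lam : Measure 𝒳) [SigmaFinite lam]
    (p q : 𝒳 → ℝ) (hpm : Measurable p) (hqm : Measurable q)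
    (hp0 : ∀ x, 0 < p x) (hq0 : ∀ x, 0 < q x)
    (hp1 : ∫ x, p x ∂lam = 1) (hq1 : ∫ x, q x ∂lam = 1)
    (P : Measure Ω) [IsProbabilityMeasure P]
    (X : ℕ → Ω → 𝒳) (hXm : ∀ i, Measurable (X i))
    (Xt : Ω → 𝒳) (hXtm : Measurable Xt)
    (ξ : Ω → ℝ) (hξm : Measurable ξ)
    (hiid : iIndepFun X P)
    (hXlaw : ∀ i, Measure.map (X i) P = densMeasure lam p)
    (hXtlaw : Measure.map Xt P = densMeasure lam q)
    (hξlaw : Measure.map ξ P = volume.restrict (Set.Icc (0 : ℝ) 1))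
    (hindep : IndepFun (fun ω i => X i ω) (fun ω => (Xt ω, ξ ω)) P)
    (hindep2 : IndepFun Xt ξ P) :
    Tendsto (fun m : ℕ => ∫ ω, (1 / (m + 1 : ℝ)) *
          ((∑ i ∈ Finset.range m,
              if p (X i ω) / q (X i ω) < p (Xt ω) / q (Xt ω) then (1 : ℝ) else 0) +
            ξ ω * (1 + ∑ i ∈ Finset.range m,
              if p (X i ω) / q (X i ω) = p (Xt ω) / q (Xt ω) then (1 : ℝ) else 0)) ∂P)
        atTop
        (𝓝 (1 / 2 - (1 / 4) * ∫ z : 𝒳 × 𝒳, |p z.1 / q z.1 - p z.2 / q z.2|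
          ∂((densMeasure lam q).prod (densMeasure lam q)))) ∧
      (¬ p =ᵐ[lam] q →
        1 / 2 - (1 / 4) * (∫ z : 𝒳 × 𝒳, |p z.1 / q z.1 - p z.2 / q z.2|
          ∂((densMeasure lam q).prod (densMeasure lam q))) < 1 / 2) := by
  have hrm : Measurable (fun x => p x / q x) := hpm.div hqm
  set r : 𝒳 → ℝ := fun x => p x / q x with hrdef
  have hr0 : ∀ x, 0 ≤ r x := fun x => le_of_lt (div_pos (hp0 x) (hq0 x))
  haveI hPp : IsProbabilityMeasure (densMeasure lam p) :=
    densMeasure_isProb lam p (fun x => (hp0 x).le) hp1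
  haveI hPq : IsProbabilityMeasure (densMeasure lam q) :=
    densMeasure_isProb lam q (fun x => (hq0 x).le) hq1
  set ν : Measure 𝒳 := densMeasure lam q with hν
  set μp : Measure 𝒳 := densMeasure lam p with hμpdef
  set unif : Measure ℝ := volume.restrict (Set.Icc (0 : ℝ) 1) with hunif
  have hμp : μp = ν.withDensity (fun x => ENNReal.ofReal (r x)) := by
    rw [hμpdef, hν, densMeasure, densMeasure,
      ← withDensity_mul _ hqm.ennreal_ofReal hrm.ennreal_ofReal]
    congr 1
    funext x
    rw [Pi.mul_apply, ← ENNReal.ofReal_mul (hq0 x).le, mul_comm,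
      div_mul_cancel₀ _ (ne_of_gt (hq0 x))]
  have hlint : ∫⁻ x, ENNReal.ofReal (r x) ∂ν = 1 := by
    rw [hν, densMeasure, lintegral_withDensity_eq_lintegral_mul _ hqm.ennreal_ofReal
      hrm.ennreal_ofReal]
    have heq : (fun x => (((fun x => ENNReal.ofReal (q x)) * fun x => ENNReal.ofReal (r x)) x))
        = fun x => ENNReal.ofReal (p x) := by
      funext x
      rw [Pi.mul_apply, ← ENNReal.ofReal_mul (hq0 x).le, mul_comm,
        div_mul_cancel₀ _ (ne_of_gt (hq0 x))]
    rw [heq]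
    exact aux_lintegral_one lam p (fun x => (hp0 x).le) hp1
  have hri : Integrable r ν := by
    refine ⟨hrm.aestronglyMeasurable, ?_⟩
    rw [hasFiniteIntegral_iff_ofReal (ae_of_all _ hr0), hlint]
    exact ENNReal.one_lt_top
  have hr1 : ∫ x, r x ∂ν = 1 := by
    rw [integral_eq_lintegral_of_nonneg_ae (ae_of_all _ hr0) hrm.aestronglyMeasurable, hlint]
    simp
  -- laws of pairs and triples
  have hlawpair : ∀ i, Measure.map (fun ω => (X i ω, Xt ω)) P = μp.prod ν := by
    intro i
    have h1 : IndepFun (X i) Xt P := hindep.comp (measurable_pi_apply i) measurable_fst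
    rw [(indepFun_iff_map_prod_eq_prod_map_map (hXm i).aemeasurable hXtm.aemeasurable).mp h1,
      hXlaw i, hXtlaw]
  have hlawtriple : ∀ i, Measure.map (fun ω => ((X i ω, Xt ω), ξ ω)) P
      = (μp.prod ν).prod unif := by
    intro i
    have h1 : IndepFun (X i) (fun ω => (Xt ω, ξ ω)) P :=
      hindep.comp (measurable_pi_apply i) measurable_id
    have h2 : Measure.map (fun ω => (Xt ω, ξ ω)) P = ν.prod unif := by
      rw [(indepFun_iff_map_prod_eq_prod_map_map hXtm.aemeasurable hξm.aemeasurable).mp hindep2,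
        hXtlaw, hξlaw]
    have h3 : Measure.map (fun ω => (X i ω, (Xt ω, ξ ω))) P = μp.prod (ν.prod unif) := by
      rw [(indepFun_iff_map_prod_eq_prod_map_map (hXm i).aemeasurable
        (hXtm.prodMk hξm).aemeasurable).mp h1, hXlaw i, h2]
    have h4 : (fun ω => ((X i ω, Xt ω), ξ ω))
        = ((MeasurableEquiv.prodAssoc (α := 𝒳) (β := 𝒳) (γ := ℝ)).symm
            ∘ fun ω => (X i ω, (Xt ω, ξ ω))) := rfl
    rw [h4, ← Measure.map_map (MeasurableEquiv.prodAssoc.symm.measurable)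
      ((hXm i).prodMk (hXtm.prodMk hξm)), h3, ← Measure.prodAssoc_prod,
      Measure.map_map (MeasurableEquiv.prodAssoc.symm.measurable)
        (MeasurableEquiv.prodAssoc.measurable)]
    simp
  -- measurability of indicator integrands on the product
  have hSlt : MeasurableSet {z : 𝒳 × 𝒳 | r z.1 < r z.2} :=
    measurableSet_lt (hrm.comp measurable_fst) (hrm.comp measurable_snd)
  have hSeq : MeasurableSet {z : 𝒳 × 𝒳 | r z.1 = r z.2} :=
    measurableSet_eq_fun (hrm.comp measurable_fst) (hrm.comp measurable_snd)
  have hmlt : Measurable (fun z : 𝒳 × 𝒳 => if r z.1 < r z.2 then (1:ℝ) else 0) :=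
    Measurable.ite hSlt measurable_const measurable_const
  have hmeq : Measurable (fun z : 𝒳 × 𝒳 => if r z.1 = r z.2 then (1:ℝ) else 0) :=
    Measurable.ite hSeq measurable_const measurable_const
  set a : ℝ := ∫ z : 𝒳 × 𝒳, (if r z.1 < r z.2 then (1:ℝ) else 0) ∂(μp.prod ν) with ha
  set b : ℝ := ∫ z : 𝒳 × 𝒳, (if r z.1 = r z.2 then (1:ℝ) else 0) ∂(μp.prod ν) with hb
  set I : ℝ := ∫ z : 𝒳 × 𝒳, |r z.1 - r z.2| ∂(ν.prod ν) with hI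
  have hK : a + (1/2) * b = 1/2 - (1/4) * I :=
    aux_key ν r hrm hr0 hri hr1 μp hμp
  have hu : ∫ u, u ∂unif = 1/2 := by
    rw [hunif, integral_Icc_eq_integral_Ioc, ← intervalIntegral.integral_of_le (by norm_num : (0:ℝ) ≤ 1)]
    simp
  -- expectations
  have hE1 : ∀ i, ∫ ω, (if r (X i ω) < r (Xt ω) then (1:ℝ) else 0) ∂P = a := by
    intro i
    have := integral_map ((hXm i).prodMk hXtm).aemeasurable
      (f := fun z : 𝒳 × 𝒳 => if r z.1 < r z.2 then (1:ℝ) else 0)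
      (by rw [hlawpair i]; exact hmlt.aestronglyMeasurable)
    rw [hlawpair i] at this
    exact this.symm
  have hE2 : ∀ i, ∫ ω, ξ ω * (if r (X i ω) = r (Xt ω) then (1:ℝ) else 0) ∂P = b * (1/2) := by
    intro i
    have hGm : Measurable (fun w : (𝒳 × 𝒳) × ℝ => (if r w.1.1 = r w.1.2 then (1:ℝ) else 0) * w.2) :=
      (hmeq.comp measurable_fst).mul measurable_snd
    have := integral_map (((hXm i).prodMk hXtm).prodMk hξm).aemeasurable
      (f := fun w : (𝒳 × 𝒳) × ℝ => (if r w.1.1 = r w.1.2 then (1:ℝ) else 0) * w.2)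
      (by rw [hlawtriple i]; exact hGm.aestronglyMeasurable)
    rw [hlawtriple i] at this
    have hcomm : ∀ ω, ξ ω * (if r (X i ω) = r (Xt ω) then (1:ℝ) else 0)
        = (if r (X i ω) = r (Xt ω) then (1:ℝ) else 0) * ξ ω := fun ω => mul_comm _ _
    calc ∫ ω, ξ ω * (if r (X i ω) = r (Xt ω) then (1:ℝ) else 0) ∂P
        = ∫ ω, (if r (X i ω) = r (Xt ω) then (1:ℝ) else 0) * ξ ω ∂P := by
          exact integral_congr_ae (ae_of_all _ hcomm)
      _ = ∫ w : (𝒳 × 𝒳) × ℝ, (if r w.1.1 = r w.1.2 then (1:ℝ) else 0) * w.2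
            ∂((μp.prod ν).prod unif) := this.symm
      _ = b * (1/2) := by
          rw [integral_prod_mul (μ := μp.prod ν) (ν := unif)
            (fun z : 𝒳 × 𝒳 => if r z.1 = r z.2 then (1:ℝ) else 0) (fun u : ℝ => u), hu, hb]
  have hE3 : ∫ ω, ξ ω ∂P = 1/2 := by
    have h := integral_map hξm.aemeasurable (f := fun u : ℝ => u)
      (by rw [hξlaw]; exact measurable_id.aestronglyMeasurable)
    rw [hξlaw] at h
    have h2 : ∫ ω, ξ ω ∂P = ∫ u, u ∂unif := by simpa using h.symm
    rw [h2, hu]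
  -- integrabilities over P
  have hIind_lt : ∀ i, Integrable (fun ω => if r (X i ω) < r (Xt ω) then (1:ℝ) else 0) P := by
    intro i
    refine (integrable_const (1:ℝ)).mono'
      ((hmlt.comp ((hXm i).prodMk hXtm)).aestronglyMeasurable) (ae_of_all _ fun ω => ?_)
    rw [Real.norm_eq_abs]
    split <;> norm_num
  have hIξ : Integrable ξ P := by
    have h1 : Integrable (fun u : ℝ => u) unif := by
      rw [hunif]
      exact continuous_id.integrableOn_Icc
    rw [← hξlaw] at h1
    exact (integrable_map_measure measurable_id.aestronglyMeasurable hξm.aemeasurable).mp h1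
  have hIξind : ∀ i, Integrable (fun ω => ξ ω * (if r (X i ω) = r (Xt ω) then (1:ℝ) else 0)) P := by
    intro i
    refine hIξ.norm.mono' (hξm.mul (hmeq.comp ((hXm i).prodMk hXtm))).aestronglyMeasurable
      (ae_of_all _ fun ω => ?_)
    rw [Real.norm_eq_abs, Real.norm_eq_abs, abs_mul]
    have : |if r (X i ω) < r (Xt ω) then (1:ℝ) else 0| ≤ 1 := by split <;> norm_num
    calc |ξ ω| * |if r (X i ω) = r (Xt ω) then (1:ℝ) else 0|
        ≤ |ξ ω| * 1 := by
          refine mul_le_mul_of_nonneg_left ?_ (abs_nonneg _)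
          split <;> norm_num
      _ = |ξ ω| := mul_one _
  -- the expectation formula
  have hEm : ∀ m : ℕ, (∫ ω, (1 / (m + 1 : ℝ)) *
          ((∑ i ∈ Finset.range m, if r (X i ω) < r (Xt ω) then (1 : ℝ) else 0) +
            ξ ω * (1 + ∑ i ∈ Finset.range m, if r (X i ω) = r (Xt ω) then (1 : ℝ) else 0)) ∂P)
      = (1 / (m + 1 : ℝ)) * ((m : ℝ) * a + (1 / 2 + (m : ℝ) * (b * (1 / 2)))) := by
    intro m
    have hre : ∀ ω, (∑ i ∈ Finset.range m, if r (X i ω) < r (Xt ω) then (1 : ℝ) else 0) +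
            ξ ω * (1 + ∑ i ∈ Finset.range m, if r (X i ω) = r (Xt ω) then (1 : ℝ) else 0)
        = (∑ i ∈ Finset.range m, if r (X i ω) < r (Xt ω) then (1 : ℝ) else 0) +
            (ξ ω + ∑ i ∈ Finset.range m, ξ ω * (if r (X i ω) = r (Xt ω) then (1 : ℝ) else 0)) := by
      intro ω
      rw [mul_add, mul_one, Finset.mul_sum]
    simp only [integral_const_mul, hre]
    have hIsum1 : Integrable (fun ω => ∑ i ∈ Finset.range m,
        if r (X i ω) < r (Xt ω) then (1 : ℝ) else 0) P :=
      integrable_finset_sum _ (fun i _ => hIind_lt i)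
    have hIsum2 : Integrable (fun ω => ∑ i ∈ Finset.range m,
        ξ ω * (if r (X i ω) = r (Xt ω) then (1 : ℝ) else 0)) P :=
      integrable_finset_sum _ (fun i _ => hIξind i)
    have hIadd : Integrable (fun ω => ξ ω + ∑ i ∈ Finset.range m,
        ξ ω * (if r (X i ω) = r (Xt ω) then (1 : ℝ) else 0)) P := hIξ.add hIsum2
    rw [integral_add hIsum1 hIadd, integral_add hIξ hIsum2,
      integral_finset_sum _ (fun i _ => hIind_lt i), integral_finset_sum _ (fun i _ => hIξind i)]
    congr 1
    rw [Finset.sum_congr rfl (fun i _ => hE1 i), Finset.sum_congr rfl (fun i _ => hE2 i),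
      Finset.sum_const, Finset.sum_const, Finset.card_range, nsmul_eq_mul, nsmul_eq_mul, hE3]
  constructor
  · have hmain : Tendsto (fun m : ℕ => (1 / (m + 1 : ℝ)) *
        ((m : ℝ) * a + (1 / 2 + (m : ℝ) * (b * (1 / 2))))) atTop (𝓝 (1/2 - (1/4) * I)) := by
      rw [← hK]
      exact aux_tendsto a b
    exact hmain.congr (fun m => (hEm m).symm)
  · intro hne
    have hIint : Integrable (fun z : 𝒳 × 𝒳 => |r z.1 - r z.2|) (ν.prod ν) := by
      have h_r1 : Integrable (fun z : 𝒳 × 𝒳 => r z.1) (ν.prod ν) := by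
        simpa using hri.mul_prod (integrable_const (1:ℝ))
      have h_r2 : Integrable (fun z : 𝒳 × 𝒳 => r z.2) (ν.prod ν) := by
        simpa using (integrable_const (1:ℝ)).mul_prod hri
      exact (h_r1.sub h_r2).abs
    have hI0 : 0 ≤ I := integral_nonneg (fun z => abs_nonneg _)
    have hIne : I ≠ 0 := by
      intro h0
      have hz : (fun z : 𝒳 × 𝒳 => |r z.1 - r z.2|) =ᵐ[ν.prod ν] 0 :=
        (integral_eq_zero_iff_of_nonneg_ae (ae_of_all _ fun z => abs_nonneg _) hIint).mp h0
      have h2 : ∀ᵐ x ∂ν, ∀ᵐ y ∂ν, |r x - r y| = 0 := by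
        have := Measure.ae_ae_of_ae_prod (μ := ν) (ν := ν)
          (p := fun z : 𝒳 × 𝒳 => |r z.1 - r z.2| = 0) hz
        exact this
      haveI : (ae ν).NeBot := by
        exact IsProbabilityMeasure.ae_neBot
      obtain ⟨x0, hx0⟩ := h2.exists
      have hconst : ∀ᵐ y ∂ν, r y = r x0 := by
        filter_upwards [hx0] with y hy
        have := abs_eq_zero.mp hy
        linarith
      have hlam : ∀ᵐ y ∂lam, r y = r x0 := by
        rw [hν, densMeasure] at hconst
        have := (ae_withDensity_iff hqm.ennreal_ofReal).mp hconst
        filter_upwards [this] with y hy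
        refine hy ?_
        simp only [ne_eq, ENNReal.ofReal_eq_zero, not_le]
        exact hq0 y
      have hpq : ∀ᵐ y ∂lam, p y = r x0 * q y := by
        filter_upwards [hlam] with y hy
        exact (div_eq_iff (ne_of_gt (hq0 y))).mp hy
      have hc1 : r x0 = 1 := by
        have h5 : ∫ y, p y ∂lam = ∫ y, r x0 * q y ∂lam := integral_congr_ae hpq
        rw [hp1, integral_const_mul, hq1, mul_one] at h5
        linarith
      refine hne ?_
      filter_upwards [hpq] with y hy
      rw [hy, hc1, one_mul]
    have : 0 < I := lt_of_le_of_ne hI0 (Ne.symm hIne)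
    have hgoal : 1/2 - (1/4) * I < 1/2 := by linarith
    exact hgoal
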